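/- A B-grafted graph G(H_0; B_1,...,B_p) is unmixed if and only if every bipartite graph B_i is unmixed, for i = 1,...,p. -/

import Mathlib

open SimpleGraph

/-- `C` is a vertex cover of `G`. -/
def IsVC {V : Type*} (G : SimpleGraph V) (C : Set V) : Prop :=
  ∀ ⦃u v : V⦄, G.Adj u v → u ∈ C ∨ v ∈ C

/-- `C` is a minimal (inclusion-wise) vertex cover of `G`. -/
def IsMinVC {V : Type*} (G : SimpleGraph V) (C : Set V) : Prop :=
  IsVC G C ∧ ∀ C' : Set V, C' ⊆ C → IsVC G C' → C' = C

/-- `A` is an independent set of `G`. -/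
def IsIndep {V : Type*} (G : SimpleGraph V) (A : Set V) : Prop :=
  ∀ ⦃u v : V⦄, u ∈ A → v ∈ A → ¬ G.Adj u v

/-- `A` is a maximal independent set of `G`. -/
def IsMaxIndep {V : Type*} (G : SimpleGraph V) (A : Set V) : Prop :=
  IsIndep G A ∧ ∀ A' : Set V, A ⊆ A' → IsIndep G A' → A' = A

/-- `G` is unmixed: all minimal vertex covers have the same cardinality. -/
def Unmixed {V : Type*} (G : SimpleGraph V) : Prop :=
  ∀ C₁ C₂ : Set V, IsMinVC G C₁ → IsMinVC G C₂ → C₁.ncard = C₂.ncard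

/-- The B-grafted graph `G(H₀; B_1, …, B_p)`. Vertices: `X = Σ i, X_i` (left) and
`Y = Σ i, Y_i` (right), where `X_i = Y_i = Fin (n i)`. The relation `b` records the edges
of the bipartite graphs `B_i` (an `X_i`-vertex and a `Y_i`-vertex with the same index `i`).
Edges of `G`: `x x'` for `x ∈ X_i`, `x' ∈ X_j` with `ij ∈ E(H₀)`, and `x y` for
`x ∈ X_i`, `y ∈ Y_i` with `xy ∈ E(B_i)`. -/
def BGraft {p : ℕ} (H0 : SimpleGraph (Fin p)) {n : Fin p → ℕ}
    (b : (Σ i : Fin p, Fin (n i)) → (Σ i : Fin p, Fin (n i)) → Prop) :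
    SimpleGraph ((Σ i : Fin p, Fin (n i)) ⊕ (Σ i : Fin p, Fin (n i))) where
  Adj u v :=
    match u, v with
    | Sum.inl a, Sum.inl a' => H0.Adj a.1 a'.1
    | Sum.inl a, Sum.inr c => a.1 = c.1 ∧ b a c
    | Sum.inr c, Sum.inl a => a.1 = c.1 ∧ b a c
    | Sum.inr _, Sum.inr _ => False
  symm := by
    refine ⟨?_⟩
    rintro (a | c) (a' | c') h
    · exact H0.adj_symm h
    · exact h
    · exact h
    · exact h.elim
  loopless := by
    refine ⟨?_⟩
    rintro (a | c) h
    · exact H0.irrefl h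
    · exact h

/-- The bipartite graph `B_i`, on vertex set `X_i ⊕ Y_i`. -/
def BiGraph {p : ℕ} {n : Fin p → ℕ}
    (b : (Σ i : Fin p, Fin (n i)) → (Σ i : Fin p, Fin (n i)) → Prop) (i : Fin p) :
    SimpleGraph (Fin (n i) ⊕ Fin (n i)) where
  Adj u v :=
    match u, v with
    | Sum.inl a, Sum.inr c => b ⟨i, a⟩ ⟨i, c⟩
    | Sum.inr c, Sum.inl a => b ⟨i, a⟩ ⟨i, c⟩
    | _, _ => False
  symm := ⟨by rintro (a | c) (a' | c') h <;> exact h⟩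
  loopless := ⟨by rintro (a | c) h <;> exact h⟩

/-!
A vertex cover is minimal iff each of its vertices has a neighbour outside it. With this
criterion, the trace of a minimal vertex cover `C` of `G` on a block `X_i ∪ Y_i` is a minimal
vertex cover of `B_i`; the only delicate case is a vertex of `X_i` whose private neighbour lies in
another block `X_j`, and then all of `X_i` lies in `C`, which leaves no vertex of `Y_i` in `C`.
As `X_i` is itself a minimal vertex cover of `B_i`, unmixed `B_i` give `|C| = ∑ n_i`.
Conversely a minimal vertex cover `D` of `B_i` extends to the minimal vertex cover
`D ∪ ⋃_{j ≠ i} X_j` of `G`, of size `|D|` plus a constant.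
-/

open Function

section VertexCover

variable {V W : Type*} {G : SimpleGraph V} {C : Set V}

theorem IsVC.comap {G' : SimpleGraph W} (f : G' →g G) (hC : IsVC G C) : IsVC G' (f ⁻¹' C) :=
  fun _ _ h => hC (f.map_adj h)

theorem isMinVC_iff_forall_exists_adj_notMem :
    IsMinVC G C ↔ IsVC G C ∧ ∀ v ∈ C, ∃ w, G.Adj v w ∧ w ∉ C := by
  refine and_congr_right fun hC => ⟨fun hmin v hv => ?_, fun hpriv C' hC'C hC' => ?_⟩
  · by_contra! hN
    have hcover : IsVC G (C \ {v}) := by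
      intro u w huw
      by_cases hu : u = v
      · subst hu; exact Or.inr ⟨hN w huw, huw.ne'⟩
      by_cases hw : w = v
      · subst hw; exact Or.inl ⟨hN u huw.symm, huw.ne⟩
      exact (hC huw).imp (⟨·, hu⟩) (⟨·, hw⟩)
    exact (hmin _ Set.sdiff_subset hcover ▸ hv).2 rfl
  · refine hC'C.antisymm fun v hv => by_contra fun hv' => ?_
    obtain ⟨w, hvw, hw⟩ := hpriv v hv
    exact (hC' hvw).elim hv' fun hw' => hw (hC'C hw')

end VertexCover

section Blocks

variable {p : ℕ} {n : Fin p → ℕ}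

def blockIncl (i : Fin p) : Fin (n i) ⊕ Fin (n i) → (Σ j, Fin (n j)) ⊕ (Σ j, Fin (n j)) :=
  Sum.map (⟨i, ·⟩) (⟨i, ·⟩)

theorem blockIncl_injective (i : Fin p) : (blockIncl (n := n) i).Injective :=
  Sum.map_injective.2
    ⟨sigma_mk_injective (β := fun j => Fin (n j)),
      sigma_mk_injective (β := fun j => Fin (n j))⟩

def leftOutsideBlock (i : Fin p) : Set ((Σ j, Fin (n j)) ⊕ (Σ j, Fin (n j))) :=
  Sum.inl '' {a | a.1 ≠ i}

theorem blockIncl_notMem_leftOutsideBlock (i : Fin p) (d : Fin (n i) ⊕ Fin (n i)) :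
    blockIncl i d ∉ leftOutsideBlock i := by
  rintro ⟨a, ha, h⟩
  rcases d with x | y <;> simp only [blockIncl, Sum.map_inl, Sum.map_inr, reduceCtorEq,
    Sum.inl.injEq] at h
  exact ha (congrArg Sigma.fst h)

theorem ncard_eq_sum_ncard_preimage_blockIncl
    (C : Set ((Σ j, Fin (n j)) ⊕ (Σ j, Fin (n j)))) :
    C.ncard = ∑ i, (blockIncl i ⁻¹' C).ncard := by
  have hdisj : Pairwise (Disjoint on fun i => blockIncl i '' (blockIncl i ⁻¹' C)) := by
    refine fun i j hij => Set.disjoint_left.2 ?_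
    rintro _ ⟨d, -, rfl⟩ ⟨d', -, h⟩
    rcases d with x | y <;> rcases d' with x' | y' <;>
      simp only [blockIncl, Sum.map_inl, Sum.map_inr, reduceCtorEq, Sum.inl.injEq,
        Sum.inr.injEq] at h
    exacts [hij (congrArg Sigma.fst h).symm, hij (congrArg Sigma.fst h).symm]
  have hcover : ⋃ i, blockIncl i '' (blockIncl i ⁻¹' C) = C := by
    refine (Set.iUnion_subset fun i => Set.image_preimage_subset _ _).antisymm ?_
    rintro (⟨i, x⟩ | ⟨i, y⟩) h
    exacts [Set.mem_iUnion.2 ⟨i, Sum.inl x, h, rfl⟩,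
      Set.mem_iUnion.2 ⟨i, Sum.inr y, h, rfl⟩]
  calc C.ncard = (⋃ i, blockIncl i '' (blockIncl i ⁻¹' C)).ncard := by rw [hcover]
    _ = ∑ i, (blockIncl i ⁻¹' C).ncard := by
        rw [Set.ncard_iUnion_of_finite (fun _ => Set.toFinite _) hdisj, finsum_eq_sum_of_fintype]
        simp_rw [Set.ncard_image_of_injective _ (blockIncl_injective _)]

end Blocks

section BGraft

variable {p : ℕ} (H0 : SimpleGraph (Fin p)) {n : Fin p → ℕ}
  (b : (Σ i : Fin p, Fin (n i)) → (Σ i : Fin p, Fin (n i)) → Prop)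

theorem BiGraph.isMinVC_range_inl
    (hb1 : ∀ (i : Fin p) (a : Fin (n i)), ∃ c : Fin (n i), b ⟨i, a⟩ ⟨i, c⟩)
    (i : Fin p) : IsMinVC (BiGraph b i) (Set.range Sum.inl) := by
  refine isMinVC_iff_forall_exists_adj_notMem.2 ⟨?_, ?_⟩
  · rintro (a | c) (a' | c') h
    exacts [h.elim, Or.inl ⟨a, rfl⟩, Or.inr ⟨a', rfl⟩, h.elim]
  · rintro _ ⟨a, rfl⟩
    obtain ⟨c, hc⟩ := hb1 i a
    exact ⟨Sum.inr c, hc, by simp⟩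

def BGraft.blockEmbedding (i : Fin p) : BiGraph b i ↪g BGraft H0 b where
  toFun := blockIncl i
  inj' := blockIncl_injective i
  map_rel_iff' := by
    rintro (a | c) (a' | c') <;> simp [BGraft, BiGraph, blockIncl]

theorem BGraft.adj_blockIncl {i : Fin p} {d : Fin (n i) ⊕ Fin (n i)}
    {w : (Σ j, Fin (n j)) ⊕ (Σ j, Fin (n j))} (h : (BGraft H0 b).Adj (blockIncl i d) w) :
    (∃ e, (BiGraph b i).Adj d e ∧ w = blockIncl i e) ∨
      (d.isLeft ∧ ∃ a, H0.Adj i a.1 ∧ w = Sum.inl a) := by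
  rcases d with x | y <;> rcases w with ⟨j, x'⟩ | ⟨j, y'⟩
  · exact Or.inr ⟨rfl, _, h, rfl⟩
  · obtain ⟨rfl, hb⟩ := h
    exact Or.inl ⟨Sum.inr y', hb, rfl⟩
  · obtain ⟨rfl, hb⟩ := h
    exact Or.inl ⟨Sum.inl x', hb, rfl⟩
  · exact h.elim

theorem BGraft.isMinVC_preimage_blockIncl
    (hb1 : ∀ (i : Fin p) (a : Fin (n i)), ∃ c : Fin (n i), b ⟨i, a⟩ ⟨i, c⟩)
    {C : Set ((Σ j, Fin (n j)) ⊕ (Σ j, Fin (n j)))} (hC : IsMinVC (BGraft H0 b) C) (i : Fin p) :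
    IsMinVC (BiGraph b i) (blockIncl i ⁻¹' C) := by
  rw [isMinVC_iff_forall_exists_adj_notMem] at hC ⊢
  obtain ⟨hcover, hpriv⟩ := hC
  refine ⟨hcover.comap (blockEmbedding H0 b i).toHom, fun d hd => ?_⟩
  obtain ⟨w, hdw, hw⟩ := hpriv _ hd
  rcases adj_blockIncl H0 b hdw with ⟨e, hde, rfl⟩ | ⟨hleft, a, hia, rfl⟩
  · exact ⟨e, hde, hw⟩
  -- `a ∉ C` puts all of `X_i` into `C`; then no vertex of `Y_i` has a neighbour outside `C`,
  -- so any `B_i`-neighbour of `d` is outside `C`.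
  have hXi : ∀ x', Sum.inl ⟨i, x'⟩ ∈ C := fun x' =>
    (hcover (show (BGraft H0 b).Adj (Sum.inl ⟨i, x'⟩) (Sum.inl a) from hia)).resolve_right hw
  obtain ⟨x, rfl⟩ := Sum.isLeft_iff.1 hleft
  obtain ⟨c, hc⟩ := hb1 i x
  refine ⟨Sum.inr c, hc, fun hc' => ?_⟩
  obtain ⟨w', hcw', hw'⟩ := hpriv _ hc'
  rcases adj_blockIncl H0 b hcw' with ⟨(x' | c'), hcc', rfl⟩ | ⟨hleft', -⟩
  · exact hw' (hXi x')
  · exact hcc'.elim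
  · exact absurd hleft' (by simp)

def BGraft.extendCover (i : Fin p) (D : Set (Fin (n i) ⊕ Fin (n i))) :
    Set ((Σ j, Fin (n j)) ⊕ (Σ j, Fin (n j))) :=
  blockIncl i '' D ∪ leftOutsideBlock i

theorem BGraft.blockIncl_mem_extendCover {i : Fin p} {D : Set (Fin (n i) ⊕ Fin (n i))}
    {d : Fin (n i) ⊕ Fin (n i)} : blockIncl i d ∈ extendCover i D ↔ d ∈ D := by
  refine ⟨fun h => ?_, fun h => Or.inl ⟨d, h, rfl⟩⟩
  rcases h with ⟨e, he, hed⟩ | h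
  · exact blockIncl_injective i hed ▸ he
  · exact absurd h (blockIncl_notMem_leftOutsideBlock i d)

theorem BGraft.ncard_extendCover (i : Fin p) (D : Set (Fin (n i) ⊕ Fin (n i))) :
    (extendCover i D).ncard = D.ncard + (leftOutsideBlock (n := n) i).ncard := by
  rw [extendCover, Set.ncard_union_eq, Set.ncard_image_of_injective _ (blockIncl_injective i)]
  exact Set.disjoint_left.2 fun _ ⟨d, _, hd⟩ => hd ▸ blockIncl_notMem_leftOutsideBlock i d

theorem BGraft.isMinVC_extendCover
    (hb1 : ∀ (i : Fin p) (a : Fin (n i)), ∃ c : Fin (n i), b ⟨i, a⟩ ⟨i, c⟩)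
    {i : Fin p} {D : Set (Fin (n i) ⊕ Fin (n i))} (hD : IsMinVC (BiGraph b i) D) :
    IsMinVC (BGraft H0 b) (extendCover i D) := by
  rw [isMinVC_iff_forall_exists_adj_notMem] at hD ⊢
  obtain ⟨hcover, hpriv⟩ := hD
  refine ⟨fun u w huw => ?_, ?_⟩
  · obtain ⟨j, d, rfl⟩ : ∃ j d, u = blockIncl j d := by
      rcases u with ⟨j, x⟩ | ⟨j, y⟩
      exacts [⟨j, Sum.inl x, rfl⟩, ⟨j, Sum.inr y, rfl⟩]
    rcases adj_blockIncl H0 b huw with ⟨e, hde, rfl⟩ | ⟨hleft, a, hja, rfl⟩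
    · by_cases hj : j = i
      · subst hj
        exact (hcover hde).imp blockIncl_mem_extendCover.2 blockIncl_mem_extendCover.2
      · rcases d with x | y
        · exact Or.inl (Or.inr ⟨⟨j, x⟩, hj, rfl⟩)
        rcases e with x | y
        · exact Or.inr (Or.inr ⟨⟨j, x⟩, hj, rfl⟩)
        · exact hde.elim
    · by_cases hj : j = i
      · exact Or.inr (Or.inr ⟨a, hj ▸ hja.ne', rfl⟩)
      · obtain ⟨x, rfl⟩ := Sum.isLeft_iff.1 hleft
        exact Or.inl (Or.inr ⟨⟨j, x⟩, hj, rfl⟩)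
  · rintro _ (⟨d, hd, rfl⟩ | ⟨a, ha, rfl⟩)
    · obtain ⟨e, hde, he⟩ := hpriv d hd
      exact ⟨blockIncl i e, (blockEmbedding H0 b i).map_adj_iff.2 hde,
        blockIncl_mem_extendCover.not.2 he⟩
    · obtain ⟨c, hc⟩ := hb1 a.1 a.2
      refine ⟨Sum.inr ⟨a.1, c⟩, ⟨rfl, hc⟩, ?_⟩
      rintro (⟨d, -, h⟩ | ⟨_, -, h⟩)
      · rcases d with x | y <;> simp only [blockIncl, Sum.map_inl, Sum.map_inr, reduceCtorEq,
          Sum.inr.injEq] at h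
        exact ha (congrArg Sigma.fst h).symm
      · exact Sum.inl_ne_inr h

theorem BGraft.ncard_of_isMinVC
    (hb1 : ∀ (i : Fin p) (a : Fin (n i)), ∃ c : Fin (n i), b ⟨i, a⟩ ⟨i, c⟩)
    (hB : ∀ i, Unmixed (BiGraph b i)) {C : Set ((Σ j, Fin (n j)) ⊕ (Σ j, Fin (n j)))}
    (hC : IsMinVC (BGraft H0 b) C) : C.ncard = ∑ i, n i := by
  rw [ncard_eq_sum_ncard_preimage_blockIncl C]
  refine Finset.sum_congr rfl fun i _ => ?_
  rw [hB i _ _ (isMinVC_preimage_blockIncl H0 b hb1 hC i) (BiGraph.isMinVC_range_inl b hb1 i),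
    Set.ncard_range_of_injective Sum.inl_injective, Nat.card_eq_fintype_card, Fintype.card_fin]

end BGraft

theorem bgraft_unmixed_iff_general {p : ℕ} (H0 : SimpleGraph (Fin p)) {n : Fin p → ℕ}
    (b : (Σ i : Fin p, Fin (n i)) → (Σ i : Fin p, Fin (n i)) → Prop)
    (hb1 : ∀ (i : Fin p) (a : Fin (n i)), ∃ c : Fin (n i), b ⟨i, a⟩ ⟨i, c⟩) :
    Unmixed (BGraft H0 b) ↔ ∀ i : Fin p, Unmixed (BiGraph b i) := by
  refine ⟨fun hG i D D' hD hD' => ?_, fun hB C C' hC hC' => ?_⟩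
  · have := hG _ _ (BGraft.isMinVC_extendCover H0 b hb1 hD)
      (BGraft.isMinVC_extendCover H0 b hb1 hD')
    rwa [BGraft.ncard_extendCover, BGraft.ncard_extendCover, Nat.add_right_cancel_iff] at this
  · rw [BGraft.ncard_of_isMinVC H0 b hb1 hB hC, BGraft.ncard_of_isMinVC H0 b hb1 hB hC']

/-- A B-grafted graph `G(H₀; B_1,…,B_p)` is unmixed if and only if every bipartite graph
`B_i` is unmixed. -/
theorem bgraft_unmixed_iff {p : ℕ} (H0 : SimpleGraph (Fin p)) {n : Fin p → ℕ}
    (b : (Σ i : Fin p, Fin (n i)) → (Σ i : Fin p, Fin (n i)) → Prop)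
    (hb1 : ∀ (i : Fin p) (a : Fin (n i)), ∃ c : Fin (n i), b ⟨i, a⟩ ⟨i, c⟩)
    (hb2 : ∀ (i : Fin p) (c : Fin (n i)), ∃ a : Fin (n i), b ⟨i, a⟩ ⟨i, c⟩) :
    Unmixed (BGraft H0 b) ↔ ∀ i : Fin p, Unmixed (BiGraph b i) :=
  bgraft_unmixed_iff_general H0 b hb1
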